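/- arXiv:1705.00639 — 6 statements merged into one kernel-verified Lean document; each statement's English description precedes it below -/
import Mathlib

section
/- (Substitution rule) For any integer n ≥ 1, any 1 ≤ k ≤ N, any pairwise distinct indices i_0, …, i_k ∈ {0, …, N}, and any index u ∈ {0, …, N}, one has [x_{i_0} … x_{i_k}] = ∑_{j=0}^{k} [x_{i_0} … x_{i_{j−1}} x_u x_{i_{j+1}} … x_{i_k}], where in the j-th summand the entry x_{i_j} is replaced by x_u. -/
open MvPolynomial Finset

/-- The Fermat bracket `[x_{i 0} … x_{i (k-1)}]` associated to a tuple of variable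
indices `i : Fin k → σ` (not necessarily distinct): the product over all positions
`p < q` of `x_{i p}^n - x_{i q}^n`. -/
noncomputable def br {σ : Type} (n : ℕ) {k : ℕ} (i : Fin k → σ) : MvPolynomial σ ℂ :=
  ∏ p : Fin k, ∏ q : Fin k, if p < q then X (i p) ^ n - X (i q) ^ n else 1

lemma bracket_zero_of_eq {R : Type*} [CommRing R] {k : ℕ} (b : Fin (k + 1) → R)
    {p0 q0 : Fin (k + 1)} (hlt : p0 < q0) (heq : b p0 = b q0) :
    (∏ p, ∏ q, if p < q then b p - b q else 1) = 0 := by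
  refine Finset.prod_eq_zero (Finset.mem_univ p0) ?_
  refine Finset.prod_eq_zero (Finset.mem_univ q0) ?_
  rw [if_pos hlt, heq, sub_self]

open Polynomial in
lemma key_subst {R : Type*} [CommRing R] [IsDomain R] {k : ℕ} (a : Fin (k + 1) → R)
    (ha : Function.Injective a) (t : R) :
    (∏ p, ∏ q, if p < q then a p - a q else 1) =
      ∑ j : Fin (k + 1), ∏ p, ∏ q,
        if p < q then Function.update a j t p - Function.update a j t q else 1 := by
  classical
  set V : R := ∏ p, ∏ q, if p < q then a p - a q else 1 with hV
  set c : Fin (k + 1) → Fin (k + 1) → R[X] :=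
    fun j => Function.update (fun m => Polynomial.C (a m)) j Polynomial.X with hc
  set S : Fin (k + 1) → R[X] :=
    fun j => ∏ p, ∏ q, if p < q then c j p - c j q else 1 with hS
  have hceval : ∀ (j p : Fin (k + 1)) (x : R),
      (c j p).eval x = Function.update a j x p := by
    intro j p x
    rcases eq_or_ne p j with rfl | h
    · simp [hc]
    · simp [hc, Function.update_of_ne h]
  have heval : ∀ (j : Fin (k + 1)) (x : R),
      (S j).eval x = ∏ p, ∏ q,
        if p < q then Function.update a j x p - Function.update a j x q else 1 := by
    intro j x
    rw [hS]
    simp only [Polynomial.eval_prod, apply_ite (Polynomial.eval x), Polynomial.eval_sub,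
      Polynomial.eval_one, hceval]
  -- the sum of the S j evaluates to V at each node a m
  have hroot : ∀ m, (∑ j, S j).eval (a m) = V := by
    intro m
    rw [Polynomial.eval_finset_sum, Finset.sum_eq_single m]
    · rw [heval, Function.update_eq_self]
    · intro j _ hj
      rw [heval]
      rcases lt_or_gt_of_ne hj with h | h
      · exact bracket_zero_of_eq _ h (by
          simp [Function.update_apply, Ne.symm hj])
      · exact bracket_zero_of_eq _ h (by
          simp [Function.update_apply, Ne.symm hj])
    · intro h; exact absurd (Finset.mem_univ m) h
  -- degree bound
  have hdeg : ∀ j, (S j).natDegree ≤ k := by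
    intro j
    have h1 : (S j).natDegree ≤ ∑ p, ∑ q,
        (if p < q then c j p - c j q else 1 : R[X]).natDegree := by
      refine (Polynomial.natDegree_prod_le _ _).trans ?_
      exact Finset.sum_le_sum fun p _ => Polynomial.natDegree_prod_le _ _
    have h2 : ∀ p q : Fin (k + 1),
        (if p < q then c j p - c j q else 1 : R[X]).natDegree ≤
          (if p < q ∧ (p = j ∨ q = j) then 1 else 0) := by
      intro p q
      by_cases hpq : p < q
      · rw [if_pos hpq]
        by_cases hp : p = j
        · subst hp
          rw [if_pos ⟨hpq, Or.inl rfl⟩]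
          have hq : q ≠ p := (hpq.ne).symm
          simp only [hc, Function.update_self, Function.update_of_ne hq]
          exact (Polynomial.natDegree_X_sub_C (a q)).le
        · by_cases hq : q = j
          · subst hq
            rw [if_pos ⟨hpq, Or.inr rfl⟩]
            simp only [hc, Function.update_self, Function.update_of_ne hp]
            refine (Polynomial.natDegree_sub_le _ _).trans ?_
            simp
          · rw [if_neg (by tauto)]
            simp only [hc, Function.update_of_ne hp, Function.update_of_ne hq,
              ← Polynomial.C_sub, Polynomial.natDegree_C, le_refl]
      · rw [if_neg hpq, if_neg (by tauto)]
        simp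
    have h3 : (∑ p, ∑ q, (if p < q ∧ (p = j ∨ q = j) then 1 else 0 : ℕ)) = k := by
      have hsplit : ∀ p q : Fin (k + 1),
          (if p < q ∧ (p = j ∨ q = j) then 1 else 0 : ℕ) =
            (if p = j then (if p < q then 1 else 0) else (if q = j ∧ p < q then 1 else 0)) := by
        intro p q
        by_cases hp : p = j
        · subst hp; by_cases hpq : p < q <;> simp [hpq]
        · simp only [if_neg hp]
          by_cases hq : q = j
          · subst hq; by_cases hpq : p < q <;> simp [hpq, hp]
          · simp [hp, hq]
      simp only [hsplit]
      have hinner : ∀ p : Fin (k + 1),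
          (∑ q : Fin (k + 1), if p = j then (if p < q then 1 else 0)
            else (if q = j ∧ p < q then 1 else 0) : ℕ) =
          if p = j then k - (j : ℕ) else (if p < j then 1 else 0) := by
        intro p
        by_cases hp : p = j
        · subst hp
          simp only [eq_self_iff_true, if_true]
          have : (∑ q : Fin (k + 1), if p < q then 1 else 0 : ℕ) = #(Finset.Ioi p) := by
            rw [← Finset.filter_lt_eq_Ioi]
            simp [Finset.sum_boole]
          rw [this, Fin.card_Ioi]; omega
        · simp only [if_neg hp]
          have hre : ∀ q : Fin (k + 1), (if q = j ∧ p < q then 1 else 0 : ℕ) =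
              (if q = j then (if p < q then 1 else 0) else 0) := by
            intro q; by_cases hq : q = j <;> simp [hq]
          simp only [hre]
          rw [Finset.sum_ite_eq' Finset.univ j]
          simp
      simp only [hinner]
      have hsum2 : ∀ p : Fin (k + 1),
          (if p = j then k - (j : ℕ) else (if p < j then 1 else 0)) =
          (if p = j then k - (j : ℕ) else 0) + (if p < j then 1 else 0) := by
        intro p
        by_cases hp : p = j
        · subst hp; simp [lt_irrefl]
        · simp [hp]
      simp only [hsum2]
      rw [Finset.sum_add_distrib, Finset.sum_ite_eq' Finset.univ j]
      have h4 : (∑ p : Fin (k + 1), if p < j then 1 else 0 : ℕ) = #(Finset.Iio j) := by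
        rw [← Finset.filter_gt_eq_Iio]
        simp [Finset.sum_boole]
      rw [h4, Fin.card_Iio]
      simp only [Finset.mem_univ, if_pos]
      have := j.is_le
      omega
    calc (S j).natDegree ≤ _ := h1
      _ ≤ ∑ p, ∑ q, (if p < q ∧ (p = j ∨ q = j) then 1 else 0 : ℕ) :=
        Finset.sum_le_sum fun p _ => Finset.sum_le_sum fun q _ => h2 p q
      _ = k := h3
  -- the difference polynomial is zero
  have hF : (∑ j, S j) - Polynomial.C V = 0 := by
    refine Polynomial.eq_zero_of_natDegree_lt_card_of_eval_eq_zero _ ha ?_ ?_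
    · intro m
      rw [Polynomial.eval_sub, hroot, Polynomial.eval_C, sub_self]
    · rw [Fintype.card_fin]
      refine lt_of_le_of_lt (Polynomial.natDegree_sub_le _ _) ?_
      rw [Polynomial.natDegree_C]
      have : (∑ j, S j).natDegree ≤ k :=
        Polynomial.natDegree_sum_le_of_forall_le _ _ fun j _ => hdeg j
      omega
  -- evaluate at t
  have := congrArg (Polynomial.eval t) hF
  rw [Polynomial.eval_sub, Polynomial.eval_C, Polynomial.eval_zero, sub_eq_zero,
    Polynomial.eval_finset_sum] at this
  rw [← this]
  exact Finset.sum_congr rfl fun j _ => heval j t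

/-- Substitution rule: `[x_{i_0} … x_{i_k}] = ∑_{j=0}^k [x_{i_0} … x_u … x_{i_k}]`,
where in the `j`-th summand the entry `x_{i_j}` is replaced by `x_u`. -/
theorem bracket_substitution (N n k : ℕ) (hn : 1 ≤ n) (hk1 : 1 ≤ k) (hkN : k ≤ N)
    (i : Fin (k + 1) → Fin (N + 1)) (hi : Function.Injective i) (u : Fin (N + 1)) :
    br n i = ∑ j : Fin (k + 1), br n (Function.update i j u) := by
  have hinj : Function.Injective
      (fun m => (X (i m) : MvPolynomial (Fin (N + 1)) ℂ) ^ n) := by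
    intro p q h
    apply hi
    have h1 : (X (i p) : MvPolynomial (Fin (N + 1)) ℂ) ^ n = X (i q) ^ n := h
    rw [X_pow_eq_monomial, X_pow_eq_monomial] at h1
    have h2 := MvPolynomial.monomial_left_injective (one_ne_zero : (1 : ℂ) ≠ 0) h1
    exact Finsupp.single_left_injective (by omega : n ≠ 0) h2
  have hkey := key_subst (fun m => (X (i m) : MvPolynomial (Fin (N + 1)) ℂ) ^ n) hinj
    ((X u : MvPolynomial (Fin (N + 1)) ℂ) ^ n)
  unfold br
  rw [hkey]
  refine Finset.sum_congr rfl fun j _ => ?_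
  have hupd : ∀ p, (X (Function.update i j u p) : MvPolynomial (Fin (N + 1)) ℂ) ^ n =
      Function.update (fun m => (X (i m) : MvPolynomial (Fin (N + 1)) ℂ) ^ n) j
        (X u ^ n) p := by
    intro p
    rcases eq_or_ne p j with rfl | h
    · simp
    · simp [Function.update_of_ne h]
  simp only [hupd]
end

section
/- (Useful rule) For any integers n ≥ 1 and k ≥ 2, the following identity holds in the polynomial ring ℂ[x_0, …, x_k, y_1, …, y_k]: [x_0 … x_k] = ∑_{j=0}^{k} (−1)^j · [x_0 … x̂_j … x_k] · ∏_{l=1}^{k} (x_j^n − y_l^n), where x̂_j means that the variable x_j is omitted. -/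
open MvPolynomial Finset

section Aux

variable {R : Type*} [CommRing R]

/-- The generic alternating product. -/
def Dv {m : ℕ} (v : Fin m → R) : R := ∏ p, ∏ q, if p < q then v p - v q else 1

lemma Dv_eq_det {m : ℕ} (v : Fin m → R) :
    Dv v = (-1) ^ (∑ i ∈ Finset.range m, i) * Matrix.det (Matrix.vandermonde v) := by
  rw [Matrix.det_vandermonde, Dv]
  have h0 : ∀ p : Fin m, Ioi p = univ.filter (fun q => p < q) := by
    intro p; ext q; simp
  calc ∏ p : Fin m, ∏ q : Fin m, (if p < q then v p - v q else 1)
      = ∏ p : Fin m, ∏ q ∈ Ioi p, (v p - v q) := by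
        refine Finset.prod_congr rfl fun p _ => ?_
        rw [h0, Finset.prod_filter]
    _ = ∏ p : Fin m, ((-1) ^ (Ioi p).card * ∏ q ∈ Ioi p, (v q - v p)) := by
        refine Finset.prod_congr rfl fun p _ => ?_
        rw [← Finset.prod_const, ← Finset.prod_mul_distrib]
        exact Finset.prod_congr rfl fun q _ => by ring
    _ = (-1) ^ (∑ p : Fin m, (Ioi p).card) * ∏ p : Fin m, ∏ q ∈ Ioi p, (v q - v p) := by
        rw [Finset.prod_mul_distrib, Finset.prod_pow_eq_pow_sum]
    _ = (-1) ^ (∑ i ∈ Finset.range m, i) * ∏ p : Fin m, ∏ q ∈ Ioi p, (v q - v p) := by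
        congr 1
        have : ∑ p : Fin m, (Ioi p).card = ∑ i ∈ Finset.range m, (m - 1 - i) := by
          rw [← Fin.sum_univ_eq_sum_range]
          exact Finset.sum_congr rfl fun p _ => Fin.card_Ioi p
        rw [this, ← Finset.sum_range_reflect (fun i => i) m]


section
variable [Nontrivial R]

lemma core_det {k : ℕ} (v : Fin (k+1) → R) (w : Fin k → R) :
    (-1 : R) ^ k * Matrix.det (Matrix.vandermonde v) =
      ∑ j : Fin (k+1), (-1) ^ (j : ℕ) * (∏ l, (v j - w l)) *
        Matrix.det (Matrix.vandermonde (v ∘ j.succAbove)) := by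
  set p : Polynomial R := ∏ l : Fin k, (Polynomial.X - Polynomial.C (w l)) with hp
  have hm : p.Monic := Polynomial.monic_prod_of_monic _ _ fun l _ => Polynomial.monic_X_sub_C _
  have hdeg : p.natDegree = k := by
    rw [hp, Polynomial.natDegree_prod_of_monic _ _ fun l _ => Polynomial.monic_X_sub_C _]
    simp [Polynomial.natDegree_X_sub_C, Polynomial.natDegree_X]
  set M : Matrix (Fin (k+1)) (Fin (k+1)) R :=
    Matrix.of fun j i => Fin.cases (∏ l, (v j - w l)) (fun q : Fin k => v j ^ (q : ℕ)) i with hM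
  set T : Matrix (Fin (k+1)) (Fin (k+1)) R :=
    Matrix.of fun q i =>
      Fin.cases (p.coeff (q : ℕ)) (fun j' : Fin k => if (q : ℕ) = (j' : ℕ) then (1:R) else 0) i
      with hT
  have hMT : M = Matrix.vandermonde v * T := by
    ext j i
    rw [Matrix.mul_apply]
    induction i using Fin.cases with
    | zero =>
        simp only [hM, hT, Matrix.of_apply, Fin.cases_zero, Matrix.vandermonde_apply]
        have he : p.eval (v j) = ∏ l, (v j - w l) := by
          simp [hp, Polynomial.eval_prod]
        rw [← he, Polynomial.eval_eq_sum_range, hdeg, ← Fin.sum_univ_eq_sum_range]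
        exact Finset.sum_congr rfl fun q _ => (mul_comm _ _)
    | succ j' =>
        simp only [hM, hT, Matrix.of_apply, Fin.cases_succ]
        rw [Finset.sum_eq_single (Fin.castSucc j')]
        · simp
        · intro q _ hq
          rw [if_neg, mul_zero]
          exact fun h => hq (Fin.ext (by simpa using h))
        · simp
  have hTdet : T.det = (-1 : R) ^ k := by
    rw [Matrix.det_succ_column_zero]
    rw [Finset.sum_eq_single (Fin.last k)]
    · have h1 : T.submatrix (Fin.last k).succAbove Fin.succ = 1 := by
        ext t s
        simp only [Matrix.submatrix_apply, hT, Matrix.of_apply, Fin.succAbove_last,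
          Fin.cases_succ, Fin.coe_castSucc, Matrix.one_apply]
        by_cases h : t = s
        · simp [h]
        · rw [if_neg (fun hc => h (Fin.ext hc)), if_neg h]
      have h2 : T (Fin.last k) 0 = 1 := by
        simp only [hT, Matrix.of_apply, Fin.cases_zero, Fin.val_last]
        rw [← hdeg]; exact hm.coeff_natDegree
      rw [h1, h2, Matrix.det_one, Fin.val_last]; ring
    · intro i _ hi
      have hik : (i : ℕ) < k := by
        have := Fin.lt_last_iff_ne_last.mpr hi
        simpa [Fin.lt_def] using this
      have hk1 : 1 ≤ k := Nat.one_le_of_lt (Nat.lt_of_le_of_lt (Nat.zero_le _) hik)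
      set t₀ : Fin k := ⟨k - 1, by omega⟩ with ht₀
      have hrow : i.succAbove t₀ = Fin.last k := by
        rw [Fin.succAbove_of_le_castSucc]
        · exact Fin.ext (by simp [ht₀]; omega)
        · rw [Fin.le_def]; simp [ht₀]; omega
      have hz : Matrix.det (T.submatrix i.succAbove Fin.succ) = 0 := by
        apply Matrix.det_eq_zero_of_row_eq_zero t₀
        intro s
        simp only [Matrix.submatrix_apply, hrow, hT, Matrix.of_apply, Fin.cases_succ,
          Fin.val_last]
        rw [if_neg]
        intro h
        exact absurd s.isLt (by omega)
      rw [hz, mul_zero]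
    · simp
  have hMdet2 : M.det = ∑ j : Fin (k+1), (-1) ^ (j : ℕ) * (∏ l, (v j - w l)) *
      Matrix.det (Matrix.vandermonde (v ∘ j.succAbove)) := by
    rw [Matrix.det_succ_column_zero]
    refine Finset.sum_congr rfl fun j _ => ?_
    have hsub : M.submatrix j.succAbove Fin.succ = Matrix.vandermonde (v ∘ j.succAbove) := by
      ext t s
      simp [hM, Matrix.vandermonde_apply]
    rw [hsub]
    simp [hM]
  rw [← hMdet2, hMT, Matrix.det_mul, hTdet]; ring

end
end Aux

/-- Useful rule: in `ℂ[x_0, …, x_k, y_1, …, y_k]` (the `x`'s indexed by `Sum.inl`,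
the `y`'s by `Sum.inr`),
`[x_0 … x_k] = ∑_{j=0}^k (-1)^j [x_0 … x̂_j … x_k] ∏_{l=1}^k (x_j^n - y_l^n)`. -/

theorem bracket_useful_rule (n k : ℕ) (hn : 1 ≤ n) (hk : 2 ≤ k) :
    br n (Sum.inl : Fin (k + 1) → Fin (k + 1) ⊕ Fin k) =
      ∑ j : Fin (k + 1),
        (-1 : MvPolynomial (Fin (k + 1) ⊕ Fin k) ℂ) ^ j.val *
          br n (fun t : Fin k => (Sum.inl (j.succAbove t) : Fin (k + 1) ⊕ Fin k)) *
          ∏ l : Fin k, (X (Sum.inl j : Fin (k + 1) ⊕ Fin k) ^ n - X (Sum.inr l) ^ n) := by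
  have h1 : br n (Sum.inl : Fin (k + 1) → Fin (k + 1) ⊕ Fin k) =
      Dv (fun j : Fin (k+1) => (X (Sum.inl j) : MvPolynomial (Fin (k + 1) ⊕ Fin k) ℂ) ^ n) := rfl
  have h2 : ∀ j : Fin (k+1), br n (fun t : Fin k => (Sum.inl (j.succAbove t) : Fin (k + 1) ⊕ Fin k)) =
      Dv ((fun j : Fin (k+1) => (X (Sum.inl j) : MvPolynomial (Fin (k + 1) ⊕ Fin k) ℂ) ^ n) ∘ j.succAbove) :=
    fun j => rfl
  have hc := core_det (R := MvPolynomial (Fin (k + 1) ⊕ Fin k) ℂ)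
    (fun j : Fin (k+1) => (X (Sum.inl j)) ^ n) (fun l : Fin k => (X (Sum.inr l)) ^ n)
  rw [h1, Dv_eq_det, Finset.sum_range_succ, pow_add, mul_assoc, hc, Finset.mul_sum]
  refine Finset.sum_congr rfl fun j _ => ?_
  rw [h2 j, Dv_eq_det]
  ring
end

section
/- For all integers N ≥ 3 and n ≥ 3, the ideal I_{N,n} equals the intersection ⋂_{i=0}^{N} J_i, where J_i ⊆ ℂ[x_0, …, x_N] is the ideal of all polynomials vanishing at every point x ∈ ℂ^{N+1} whose coordinate vector with the i-th entry deleted lies in V_{N−1,n} ⊆ ℂ^N (so J_i is the ideal of the cone with vertex the i-th coordinate point over V_{N−1,n} placed in the hyperplane x_i = 0). -/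
open MvPolynomial Finset

/-- `Vset n m ⊆ ℂ^m` is the union of the codimension-2 flats of the Fermat
arrangement: the flats `{x_i = x_j = 0}` for `i < j`, and the flats
`{x_j = δ x_i, x_k = ε x_i}` for pairwise distinct `i, j, k` and `n`-th roots of
unity `δ, ε`.  (For `m = N + 1` this is the set `V_{N,n}`.) -/
def Vset (n m : ℕ) : Set (Fin m → ℂ) :=
  {x | (∃ i j : Fin m, i < j ∧ x i = 0 ∧ x j = 0) ∨
       (∃ i j k : Fin m, i ≠ j ∧ i ≠ k ∧ j ≠ k ∧
         ∃ δ ε : ℂ, δ ^ n = 1 ∧ ε ^ n = 1 ∧ x j = δ * x i ∧ x k = ε * x i)}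

/-!
Each flat of `V_{N,n}` is cut out by conditions on at most three coordinates, so when
`N + 1 ≥ 4` some coordinate `ℓ` is free on it, and deleting `ℓ` maps it onto a flat of
`V_{N-1,n}`; conversely `succAbove ℓ` carries flats of `V_{N-1,n}` to flats of `V_{N,n}`.
Hence `V_{N,n}` is the union of the cones over `V_{N-1,n}`, and the ideal of a union is
the intersection of the ideals.
-/

theorem MvPolynomial.vanishingIdeal_iUnion {σ k K ι : Type*} [Field k] [Field K] [Algebra k K]
    (V : ι → Set (σ → K)) : vanishingIdeal k (⋃ i, V i) = ⨅ i, vanishingIdeal k (V i) :=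
  zeroLocus_vanishingIdeal_galoisConnection.u_iInf

theorem exists_ne_ne_ne_of_three_lt_card {α : Type*} [Fintype α] [DecidableEq α]
    (h : 3 < Fintype.card α) (i j k : α) : ∃ ℓ, ℓ ≠ i ∧ ℓ ≠ j ∧ ℓ ≠ k := by
  obtain ⟨ℓ, -, hℓ⟩ := Finset.exists_mem_notMem_of_card_lt_card
    ((Finset.card_le_three (a := i) (b := j) (c := k)).trans_lt (h.trans_eq card_univ.symm))
  simp only [mem_insert, mem_singleton, not_or] at hℓ
  exact ⟨ℓ, hℓ⟩

namespace Vset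

variable {n m : ℕ}

theorem mem_of_comp_succAbove_mem {x : Fin (m + 1) → ℂ} {ℓ : Fin (m + 1)}
    (hx : x ∘ ℓ.succAbove ∈ Vset n m) : x ∈ Vset n (m + 1) := by
  have hinj : Function.Injective ℓ.succAbove := Fin.succAbove_right_injective
  rcases hx with ⟨a, b, hab, ha, hb⟩ | ⟨a, b, c, hab, hac, hbc, δ, ε, hδ, hε, hb, hc⟩
  · exact Or.inl ⟨_, _, Fin.strictMono_succAbove ℓ hab, ha, hb⟩
  · exact Or.inr ⟨_, _, _, hinj.ne hab, hinj.ne hac, hinj.ne hbc, δ, ε, hδ, hε, hb, hc⟩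

theorem exists_comp_succAbove_mem (hm : 3 ≤ m) {x : Fin (m + 1) → ℂ} (hx : x ∈ Vset n (m + 1)) :
    ∃ ℓ : Fin (m + 1), x ∘ ℓ.succAbove ∈ Vset n m := by
  have hcard : 3 < Fintype.card (Fin (m + 1)) := by simpa using hm
  rcases hx with ⟨i, j, hij, hi, hj⟩ | ⟨i, j, k, hij, hik, hjk, δ, ε, hδ, hε, hj, hk⟩
  · obtain ⟨ℓ, hℓi, hℓj, -⟩ := exists_ne_ne_ne_of_three_lt_card hcard i j j
    obtain ⟨a, rfl⟩ := Fin.exists_succAbove_eq hℓi.symm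
    obtain ⟨b, rfl⟩ := Fin.exists_succAbove_eq hℓj.symm
    exact ⟨ℓ, Or.inl ⟨a, b, (Fin.strictMono_succAbove ℓ).lt_iff_lt.mp hij, hi, hj⟩⟩
  · obtain ⟨ℓ, hℓi, hℓj, hℓk⟩ := exists_ne_ne_ne_of_three_lt_card hcard i j k
    obtain ⟨a, rfl⟩ := Fin.exists_succAbove_eq hℓi.symm
    obtain ⟨b, rfl⟩ := Fin.exists_succAbove_eq hℓj.symm
    obtain ⟨c, rfl⟩ := Fin.exists_succAbove_eq hℓk.symm
    exact ⟨ℓ, Or.inr ⟨a, b, c, ne_of_apply_ne _ hij, ne_of_apply_ne _ hik, ne_of_apply_ne _ hjk,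
      δ, ε, hδ, hε, hj, hk⟩⟩

theorem eq_iUnion_cones (hm : 3 ≤ m) :
    Vset n (m + 1) = ⋃ ℓ : Fin (m + 1), {x | x ∘ ℓ.succAbove ∈ Vset n m} := by
  ext x
  simp only [Set.mem_iUnion, Set.mem_ofPred_eq]
  exact ⟨exists_comp_succAbove_mem hm, fun ⟨_, hx⟩ => mem_of_comp_succAbove_mem hx⟩

end Vset

theorem ideal_eq_inter_cone_ideals_general (N n : ℕ) (hN : 3 ≤ N) :
    MvPolynomial.vanishingIdeal ℂ (Vset n (N + 1)) =
      ⨅ i : Fin (N + 1),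
        MvPolynomial.vanishingIdeal ℂ
          {x : Fin (N + 1) → ℂ | (x ∘ i.succAbove) ∈ Vset n N} := by
  rw [Vset.eq_iUnion_cones hN, vanishingIdeal_iUnion]

/-- `I_{N,n}` is the intersection over `i = 0, …, N` of the ideals of the cones
with vertex the `i`-th coordinate point over `V_{N-1,n}` placed in the hyperplane
`x_i = 0`; the cone over `V_{N-1,n}` consists of the points `x ∈ ℂ^{N+1}` whose
coordinate vector with the `i`-th entry deleted lies in `V_{N-1,n} ⊆ ℂ^N`. -/
theorem ideal_eq_inter_cone_ideals (N n : ℕ) (hN : 3 ≤ N) (hn : 3 ≤ n) :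
    MvPolynomial.vanishingIdeal ℂ (Vset n (N + 1)) =
      ⨅ i : Fin (N + 1),
        MvPolynomial.vanishingIdeal ℂ
          {x : Fin (N + 1) → ℂ | (x ∘ i.succAbove) ∈ Vset n N} :=
  ideal_eq_inter_cone_ideals_general N n hN
end

section
/- For all integers N ≥ 2 and n ≥ 3, every partial derivative of order at most 2 of the Fermat polynomial F_{N,n} = ∏_{0 ≤ i < j ≤ N} (x_i^n − x_j^n) (including F_{N,n} itself) vanishes at every point of V_{N,n}; that is, F_{N,n} lies in the third differential (hence third symbolic) power of I_{N,n}. -/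
open MvPolynomial Finset

/-- The Fermat polynomial `F_{N,n} = ∏_{0 ≤ i < j ≤ N} (x_i^n - x_j^n)`. -/
noncomputable def Fermat (n m : ℕ) : MvPolynomial (Fin m) ℂ :=
  ∏ i : Fin m, ∏ j : Fin m, if i < j then X i ^ n - X j ^ n else 1

/-- All partial derivatives of order ≤ 2 of `p` vanish at `x`. -/
def Van3 {m : ℕ} (x : Fin m → ℂ) (p : MvPolynomial (Fin m) ℂ) : Prop :=
  eval x p = 0 ∧ (∀ i, eval x (pderiv i p) = 0) ∧
    ∀ i j, eval x (pderiv i (pderiv j p)) = 0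

lemma van3_mul3 {m : ℕ} (x : Fin m → ℂ) (p q r t : MvPolynomial (Fin m) ℂ)
    (hp : eval x p = 0) (hq : eval x q = 0) (hr : eval x r = 0) :
    Van3 x (p * (q * (r * t))) := by
  refine ⟨?_, fun i => ?_, fun i j => ?_⟩ <;>
    simp [pderiv_mul, hp, hq, hr]

lemma P_ne {α : Type*} [LinearOrder α] {a b c d : α}
    (h1 : ¬(a = c ∧ b = d)) (h2 : ¬(a = d ∧ b = c)) :
    (if a < b then (a, b) else (b, a)) ≠ (if c < d then (c, d) else (d, c)) := by
  split_ifs <;> simp_all [Prod.ext_iff] <;> tauto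

lemma van3_sub {m : ℕ} {x : Fin m → ℂ} {p q : MvPolynomial (Fin m) ℂ}
    (hp : Van3 x p) (hq : Van3 x q) : Van3 x (p - q) := by
  obtain ⟨h1, h2, h3⟩ := hp
  obtain ⟨g1, g2, g3⟩ := hq
  refine ⟨?_, fun i => ?_, fun i j => ?_⟩ <;>
    simp [map_sub, h1, h2, h3, g1, g2, g3]

/-- Every partial derivative of order at most `2` of the Fermat polynomial
`F_{N,n}` (including `F_{N,n}` itself) vanishes at every point of `V_{N,n}`;
i.e. `F_{N,n}` lies in the third differential power of `I_{N,n}`. -/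
theorem fermat_mem_third_differential_power (N n : ℕ) (hN : 2 ≤ N) (hn : 3 ≤ n) :
    ∀ x ∈ Vset n (N + 1),
      eval x (Fermat n (N + 1)) = 0 ∧
      (∀ i : Fin (N + 1), eval x (pderiv i (Fermat n (N + 1))) = 0) ∧
      (∀ i j : Fin (N + 1), eval x (pderiv i (pderiv j (Fermat n (N + 1)))) = 0) := by
  intro x hx
  set g : Fin (N + 1) × Fin (N + 1) → MvPolynomial (Fin (N + 1)) ℂ :=
    fun p => if p.1 < p.2 then X p.1 ^ n - X p.2 ^ n else 1 with hg
  have hF : Fermat n (N + 1) = ∏ p : Fin (N + 1) × Fin (N + 1), g p := by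
    rw [Fermat, Fintype.prod_prod_type]
  suffices h : Van3 x (Fermat n (N + 1)) by exact ⟨h.1, h.2.1, h.2.2⟩
  rcases hx with ⟨i, j, hij, hxi, hxj⟩ | ⟨i, j, k, hij, hik, hjk, δ, ε, hδ, hε, hxj, hxk⟩
  · -- case x_i = x_j = 0
    have hsplit : Fermat n (N + 1)
        = g (i, j) * ∏ p ∈ (univ : Finset _).erase (i, j), g p := by
      rw [hF, mul_prod_erase _ g (mem_univ (i, j))]
    set t := ∏ p ∈ (univ : Finset _).erase (i, j), g p with ht
    have hgij : g (i, j) = X i ^ n - X j ^ n := by simp [hg, hij]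
    have key : ∀ a : Fin (N + 1), x a = 0 →
        Van3 x ((X a : MvPolynomial (Fin (N + 1)) ℂ) ^ n * t) := by
      intro a ha
      have hrw : (X a : MvPolynomial (Fin (N + 1)) ℂ) ^ n * t
          = X a * (X a * (X a ^ (n - 2) * t)) := by
        have hnn : (X a : MvPolynomial (Fin (N + 1)) ℂ) ^ n
            = X a * (X a * X a ^ (n - 2)) := by
          conv_lhs => rw [show n = n - 2 + 2 from by omega]
          ring
        rw [hnn]; ring
      rw [hrw]
      refine van3_mul3 x _ _ _ _ (by simp [ha]) (by simp [ha]) ?_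
      rw [map_pow, eval_X, ha, zero_pow (by omega)]
    have : Fermat n (N + 1) = X i ^ n * t - X j ^ n * t := by
      rw [hsplit, hgij, sub_mul]
    rw [this]
    exact van3_sub (key i hxi) (key j hxj)
  · -- case x_j = δ x_i, x_k = ε x_i
    have hpj : x j ^ n = x i ^ n := by rw [hxj, mul_pow, hδ, one_mul]
    have hpk : x k ^ n = x i ^ n := by rw [hxk, mul_pow, hε, one_mul]
    set P : Fin (N + 1) → Fin (N + 1) → Fin (N + 1) × Fin (N + 1) :=
      fun a b => if a < b then (a, b) else (b, a) with hP
    have evalP : ∀ a b : Fin (N + 1), a ≠ b → x a ^ n = x b ^ n →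
        eval x (g (P a b)) = 0 := by
      intro a b hab h
      rcases hab.lt_or_gt with h1 | h1
      · simp [hP, hg, h1, h]
      · simp [hP, hg, h1.not_gt, h1, sub_eq_zero, h.symm]
    have h12 : P i j ≠ P i k := P_ne (by tauto) (by tauto)
    have h13 : P i j ≠ P j k := P_ne (by tauto) (by tauto)
    have h23 : P i k ≠ P j k := P_ne (by tauto) (by tauto)
    have e1 : P i k ∈ (univ : Finset _).erase (P i j) :=
      mem_erase.2 ⟨h12.symm, mem_univ _⟩
    have e2 : P j k ∈ ((univ : Finset _).erase (P i j)).erase (P i k) :=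
      mem_erase.2 ⟨h23.symm, mem_erase.2 ⟨h13.symm, mem_univ _⟩⟩
    have hsplit : Fermat n (N + 1) = g (P i j) * (g (P i k) * (g (P j k) *
        ∏ p ∈ (((univ : Finset _).erase (P i j)).erase (P i k)).erase (P j k), g p)) := by
      rw [hF, ← mul_prod_erase _ g (mem_univ (P i j)), ← mul_prod_erase _ g e1,
        ← mul_prod_erase _ g e2]
    rw [hsplit]
    exact van3_mul3 x _ _ _ _ (evalP i j hij (hpj.symm)) (evalP i k hik (hpk.symm))
      (evalP j k hjk (by rw [hpj, hpk]))
end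

section
/- Let M ≥ 1, n ≥ 1, and work in ℂ[x_0, …, x_{2M}]. Set g_A = x_0 x_1 ⋯ x_{M−1} · [x_0 … x_{M−1}] · [x_M … x_{2M}], and for j = 0, …, M set h_{A_j} = x_1 ⋯ x_{M−1} x_{M+j} · [x_1 … x_{M−1} x_{M+j}] · [x_M … x̂_{M+j} … x_{2M}]. Then g_A = ∑_{j=0}^{M} (−1)^{j+M−1} · x_0 · x_{M+j}^{n−1} · [x_0 x_1] ⋯ [x_0 x_{M−1}] · h_{A_j}. -/
/-!
Write `v_j = x_{M+j}^n` and `q(y) = y ∏_{0<s<M} (y - x_s^n)`, a monic polynomial of degree `M`.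
Pulling out the common factor `x_0 ⋯ x_{M-1} [x_0 … x_{M-1}]`, the `j`-th summand becomes
`(-1)^j q(v_j) [v_0 … v̂_j … v_M]`, and `g_A` becomes `[v_0 … v_M]`. The identity
`∑_j (-1)^j q(v_j) [v_0 … v̂_j … v_M] = [v_0 … v_M]` is the Laplace expansion of the Vandermonde
determinant of `v_0, …, v_M` whose top power column `(v_j^M)_j` has been replaced by
`(q(v_j))_j`; column operations undo the replacement because `q` is monic of degree `M`.
-/

open MvPolynomial Finset

/-- The Fermat bracket `[S] = ∏_{p < q, p,q ∈ S} (x_p^n - x_q^n)` of a subset `S`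
of the variable indices (for an increasing tuple of indices this agrees with the
bracket of the tuple). -/
noncomputable def brS (n : ℕ) {m : ℕ} (S : Finset (Fin m)) : MvPolynomial (Fin m) ℂ :=
  ∏ p ∈ S, ∏ q ∈ S, if p < q then X p ^ n - X q ^ n else 1

section Vandermonde

variable {R : Type*} [CommRing R]

open Matrix in
theorem sum_neg_one_pow_mul_eval_mul_det_vandermonde_succAbove {m : ℕ} (p : Polynomial R)
    (hp : p.natDegree ≤ m) (v : Fin (m + 1) → R) :
    ∑ i : Fin (m + 1), (-1) ^ (i + m : ℕ) * p.eval (v i) * (vandermonde (v ∘ i.succAbove)).det =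
      p.coeff m * (vandermonde v).det := by
  have heval (x : R) : p.eval x = ∑ k : Fin (m + 1), p.coeff k * x ^ (k : ℕ) := by
    rw [Polynomial.eval_eq_sum_range' (Nat.lt_succ_of_le hp),
      Fin.sum_univ_eq_sum_range (fun k => p.coeff k * x ^ k)]
  have hexpand := det_succ_column ((vandermonde v).updateCol (Fin.last m) fun i => p.eval (v i))
    (Fin.last m)
  simp only [heval, ← smul_eq_mul (p.coeff _), ← vandermonde_apply v] at hexpand
  rw [det_updateCol_sum, Fin.val_last, smul_eq_mul] at hexpand
  rw [hexpand]
  refine sum_congr rfl fun i _ => ?_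
  congr 2
  · simp [heval, vandermonde_apply]
  · ext k l
    simp [Fin.succAbove_last, vandermonde_apply]

def bracket {k : ℕ} (w : Fin k → R) : R :=
  ∏ p, ∏ q, if p < q then w p - w q else 1

theorem Fin.sum_card_Ioi (k : ℕ) : ∑ p : Fin k, #(Ioi p) = k.choose 2 := by
  simp only [Fin.card_Ioi]
  rw [Fin.sum_univ_eq_sum_range (fun i => k - 1 - i), sum_range_reflect (fun i => i) k,
    sum_range_id, Nat.choose_two_right]

open Matrix in
theorem bracket_eq_neg_one_pow_mul_det_vandermonde {k : ℕ} (w : Fin k → R) :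
    bracket w = (-1) ^ k.choose 2 * (vandermonde w).det := by
  rw [det_vandermonde, ← Fin.sum_card_Ioi, ← prod_pow_eq_pow_sum, ← prod_mul_distrib, bracket]
  refine prod_congr rfl fun p _ => ?_
  rw [← prod_filter, ← prod_neg]
  refine prod_congr (by ext; simp) fun q _ => by ring

open Matrix in
theorem sum_neg_one_pow_mul_eval_mul_bracket_succAbove {m : ℕ} (p : Polynomial R)
    (hp : p.natDegree ≤ m) (v : Fin (m + 1) → R) :
    ∑ i : Fin (m + 1), (-1) ^ (i : ℕ) * p.eval (v i) * bracket (v ∘ i.succAbove) =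
      p.coeff m * bracket v := by
  have hsq : ((-1) ^ m * (-1) ^ m : R) = 1 := by rw [← mul_pow]; simp
  calc ∑ i : Fin (m + 1), (-1) ^ (i : ℕ) * p.eval (v i) * bracket (v ∘ i.succAbove)
      = (-1) ^ m.choose 2 * (-1) ^ m * ∑ i : Fin (m + 1),
          (-1) ^ (i + m : ℕ) * p.eval (v i) * (vandermonde (v ∘ i.succAbove)).det := by
        rw [mul_sum]
        refine sum_congr rfl fun i _ => ?_
        rw [bracket_eq_neg_one_pow_mul_det_vandermonde]
        linear_combination (-1) ^ (i : ℕ) * p.eval (v i) * (-1) ^ m.choose 2 *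
          (vandermonde (v ∘ i.succAbove)).det * hsq.symm
    _ = p.coeff m * bracket v := by
        rw [sum_neg_one_pow_mul_eval_mul_det_vandermonde_succAbove p hp,
          bracket_eq_neg_one_pow_mul_det_vandermonde, Nat.choose_succ_succ', Nat.choose_one_right]
        ring

theorem sum_neg_one_pow_mul_mul_prod_sub_mul_bracket_succAbove {ι : Type*} (s : Finset ι)
    (a : ι → R) {m : ℕ} (hm : #s + 1 = m) (v : Fin (m + 1) → R) :
    ∑ i : Fin (m + 1), (-1) ^ (i : ℕ) * (v i * ∏ j ∈ s, (v i - a j)) * bracket (v ∘ i.succAbove) =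
      bracket v := by
  nontriviality R
  set q : Polynomial R := Polynomial.X * ∏ j ∈ s, (Polynomial.X - Polynomial.C (a j))
  have hprod : (∏ j ∈ s, (Polynomial.X - Polynomial.C (a j))).Monic :=
    Polynomial.monic_prod_of_monic _ _ fun j _ => Polynomial.monic_X_sub_C _
  have hdeg : q.natDegree = m := by
    rw [← hm, Polynomial.natDegree_X_mul hprod.ne_zero, Polynomial.natDegree_prod_of_monic _ _
      fun j _ => Polynomial.monic_X_sub_C _]
    simp
  have hcoeff : q.coeff m = 1 := hdeg ▸ (Polynomial.monic_X.mul hprod).coeff_natDegree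
  have := sum_neg_one_pow_mul_eval_mul_bracket_succAbove q hdeg.le v
  rw [hcoeff, one_mul] at this
  simpa [q, Polynomial.eval_prod] using this

end Vandermonde

section BracketOfFinset

variable (n : ℕ) {m : ℕ}

theorem brS_insert {a : Fin m} {T : Finset (Fin m)} (ha : a ∉ T) :
    brS n (insert a T) =
      (∏ s ∈ T, if a < s then X a ^ n - X s ^ n else 1) *
        ((∏ s ∈ T, if s < a then X s ^ n - X a ^ n else 1) * brS n T) := by
  rw [brS, prod_insert ha, prod_insert ha, if_neg (lt_irrefl a), one_mul]
  have h : ∀ p ∈ T, (∏ q ∈ insert a T, if p < q then X p ^ n - X q ^ n else 1)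
      = (if p < a then X p ^ n - X a ^ n else 1) *
        ∏ q ∈ T, if p < q then (X p ^ n - X q ^ n : MvPolynomial (Fin m) ℂ) else 1 :=
    fun p _ => prod_insert ha
  rw [prod_congr rfl h, prod_mul_distrib, brS]

theorem brS_insert_of_forall_lt {a : Fin m} {T : Finset (Fin m)} (ha : ∀ s ∈ T, a < s) :
    brS n (insert a T) = (∏ s ∈ T, (X a ^ n - X s ^ n)) * brS n T := by
  rw [brS_insert n fun h => lt_irrefl a (ha a h), prod_eq_one fun s hs => if_neg (ha s hs).asymm,
    one_mul, prod_congr rfl fun s hs => if_pos (ha s hs)]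

theorem brS_insert_of_forall_gt {a : Fin m} {T : Finset (Fin m)} (ha : ∀ s ∈ T, s < a) :
    brS n (insert a T) = (∏ s ∈ T, (X s ^ n - X a ^ n)) * brS n T := by
  rw [brS_insert n fun h => lt_irrefl a (ha a h), prod_eq_one fun s hs => if_neg (ha s hs).asymm,
    one_mul, prod_congr rfl fun s hs => if_pos (ha s hs)]

theorem brS_image_of_strictMono {k : ℕ} {g : Fin k → Fin m} (hg : StrictMono g) :
    brS n (image g univ) = bracket fun j => (X (g j) : MvPolynomial (Fin m) ℂ) ^ n := by
  rw [brS, prod_image hg.injective.injOn]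
  refine prod_congr rfl fun p _ => ?_
  rw [prod_image hg.injective.injOn]
  exact prod_congr rfl fun q _ => by simp only [hg.lt_iff_lt]

end BracketOfFinset

theorem image_univ_erase_eq_image_succAbove {α : Type*} [DecidableEq α] {k : ℕ}
    {g : Fin (k + 1) → α} (hg : g.Injective) (j : Fin (k + 1)) :
    (image g univ).erase (g j) = image (g ∘ j.succAbove) univ := by
  rw [← image_image, ← image_erase hg]
  congr 1
  ext i
  simp

theorem prod_mul_brS_insert_mul_brS_image_eq_sum {N k n : ℕ} (hn : 1 ≤ n) (a : Fin N)
    (S : Finset (Fin N)) (e : Fin (k + 1) → Fin N) (he : StrictMono e) (haS : ∀ s ∈ S, a < s)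
    (hSe : ∀ s ∈ S, ∀ j, s < e j) (hk : #S + 1 = k) :
    (∏ t ∈ insert a S, X t) * brS n (insert a S) * brS n (image e univ) =
      ∑ j : Fin (k + 1), (-1 : MvPolynomial (Fin N) ℂ) ^ (#S + j : ℕ) * X a * X (e j) ^ (n - 1) *
        (∏ s ∈ S, (X a ^ n - X s ^ n)) *
        ((∏ s ∈ S, X s) * X (e j) * brS n (insert (e j) S) *
          brS n ((image e univ).erase (e j))) := by
  set v : Fin (k + 1) → MvPolynomial (Fin N) ℂ := fun j => X (e j) ^ n
  set c := X a * (∏ s ∈ S, X s) * (∏ s ∈ S, (X a ^ n - X s ^ n)) * brS n S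
  have hsign : ((-1) ^ #S * (-1) ^ #S : MvPolynomial (Fin N) ℂ) = 1 := by rw [← mul_pow]; simp
  have hterm (j : Fin (k + 1)) :
      (-1 : MvPolynomial (Fin N) ℂ) ^ (#S + j : ℕ) * X a * X (e j) ^ (n - 1) *
        (∏ s ∈ S, (X a ^ n - X s ^ n)) *
        ((∏ s ∈ S, X s) * X (e j) * brS n (insert (e j) S) * brS n ((image e univ).erase (e j))) =
      c * ((-1) ^ (j : ℕ) * (v j * ∏ s ∈ S, (v j - X s ^ n)) * bracket (v ∘ j.succAbove)) := by
    have hpow : X (e j) ^ (n - 1) * X (e j) = v j := by rw [← pow_succ, Nat.sub_add_cancel hn]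
    have hflip : ∏ s ∈ S, (X s ^ n - v j) = (-1) ^ #S * ∏ s ∈ S, (v j - X s ^ n) := by
      rw [← prod_neg]; simp
    have hbracket : brS n (image (e ∘ j.succAbove) univ) = bracket (v ∘ j.succAbove) :=
      brS_image_of_strictMono n (he.comp (Fin.strictMono_succAbove j))
    rw [brS_insert_of_forall_gt n fun s hs => hSe s hs j,
      image_univ_erase_eq_image_succAbove he.injective, hbracket, hflip, pow_add, ← hpow]
    linear_combination (-1) ^ (j : ℕ) * c * (X (e j) ^ (n - 1) * X (e j)) *
      (∏ s ∈ S, (X (e j) ^ (n - 1) * X (e j) - X s ^ n)) * bracket (v ∘ j.succAbove) * hsign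
  rw [prod_insert fun h => lt_irrefl a (haS a h), brS_insert_of_forall_lt n haS,
    brS_image_of_strictMono n he, sum_congr rfl fun j _ => hterm j, ← mul_sum,
    sum_neg_one_pow_mul_mul_prod_sub_mul_bracket_succAbove S _ hk]
  ring

/-- In `ℂ[x_0, …, x_{2M}]`, with
`g_A = x_0 ⋯ x_{M-1} [x_0 … x_{M-1}] [x_M … x_{2M}]` and, for `j = 0, …, M`,
`h_{A_j} = x_1 ⋯ x_{M-1} x_{M+j} [x_1 … x_{M-1} x_{M+j}] [x_M … x̂_{M+j} … x_{2M}]`,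
one has
`g_A = ∑_{j=0}^M (-1)^{j+M-1} x_0 x_{M+j}^{n-1} [x_0x_1] ⋯ [x_0x_{M-1}] h_{A_j}`.
(Here the summation index `t` runs over the variables `x_{M+j}`, `j = 0, …, M`,
i.e. over the indices `t` with `M ≤ t`, and `(-1)^{j+M-1} = (-1)^{t-1}`.) -/
theorem gA_decomposition_even (M n : ℕ) (hM : 1 ≤ M) (hn : 1 ≤ n) :
    (∏ t ∈ Finset.univ.filter (fun t : Fin (2 * M + 1) => t.val < M), X t) *
        brS n (Finset.univ.filter (fun t : Fin (2 * M + 1) => t.val < M)) *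
        brS n (Finset.univ.filter (fun t : Fin (2 * M + 1) => M ≤ t.val)) =
      ∑ t ∈ Finset.univ.filter (fun t : Fin (2 * M + 1) => M ≤ t.val),
        (-1 : MvPolynomial (Fin (2 * M + 1)) ℂ) ^ (t.val - 1) *
          X 0 * X t ^ (n - 1) *
          (∏ s ∈ Finset.univ.filter (fun s : Fin (2 * M + 1) => 1 ≤ s.val ∧ s.val < M),
            (X 0 ^ n - X s ^ n)) *
          ((∏ s ∈ Finset.univ.filter (fun s : Fin (2 * M + 1) => 1 ≤ s.val ∧ s.val < M), X s) *
            X t *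
            brS n (insert t
              (Finset.univ.filter (fun s : Fin (2 * M + 1) => 1 ≤ s.val ∧ s.val < M))) *
            brS n ((Finset.univ.filter (fun s : Fin (2 * M + 1) => M ≤ s.val)).erase t)) := by
  set S := univ.filter fun s : Fin (2 * M + 1) => 1 ≤ s.val ∧ s.val < M
  have hmemS (s : Fin (2 * M + 1)) : s ∈ S ↔ 1 ≤ s.val ∧ s.val < M := by simp [S]
  set e : Fin (M + 1) → Fin (2 * M + 1) := fun j => ⟨M + j, by omega⟩
  have he : StrictMono e := fun i j hij => Nat.add_lt_add_left hij M
  have hS : #S + 1 = M := by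
    have : S = Ioo 0 ⟨M, by omega⟩ := by
      ext s; rw [hmemS, mem_Ioo, Fin.lt_def, Fin.lt_def, Fin.val_zero]
      exact Iff.rfl
    rw [this, Fin.card_Ioo, Fin.val_zero]
    exact Nat.sub_add_cancel hM
  have hA : univ.filter (fun t : Fin (2 * M + 1) => t.val < M) = insert 0 S := by
    ext t
    simp only [mem_filter, mem_univ, true_and, mem_insert, hmemS, Fin.ext_iff, Fin.val_zero]
    omega
  have hB : univ.filter (fun t : Fin (2 * M + 1) => M ≤ t.val) = image e univ := by
    ext t
    simp only [mem_filter, mem_univ, true_and, mem_image, e, Fin.ext_iff]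
    exact ⟨fun ht => ⟨⟨t - M, by omega⟩, Nat.add_sub_cancel' ht⟩,
      fun ⟨j, hj⟩ => hj ▸ Nat.le_add_right M j⟩
  have h0S : ∀ s ∈ S, 0 < s := fun s hs => by rw [hmemS] at hs; rw [Fin.lt_def, Fin.val_zero]; omega
  have hSe : ∀ s ∈ S, ∀ j, s < e j := fun s hs j => by
    rw [hmemS] at hs; rw [Fin.lt_def]; simp only [e]; omega
  rw [hA, hB, prod_mul_brS_insert_mul_brS_image_eq_sum hn 0 S e he h0S hSe hS,
    sum_image he.injective.injOn]
  refine sum_congr rfl fun j _ => ?_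
  rw [show (e j).val - 1 = #S + j by simp only [e]; omega]
end

section
/- Let M ≥ 1, n ≥ 1, and work in ℂ[x_0, …, x_{2M+1}]. Set g_A = x_0 x_1 ⋯ x_M · [x_0 … x_M] · [x_{M+1} … x_{2M+1}], and for j = 0, …, M set g_{A_j} = x_0 ⋯ x̂_j ⋯ x_M · [x_0 … x̂_j … x_M] · [x_j x_{M+1} … x_{2M}]. Then g_A = ∑_{j=0}^{M} (−1)^j · x_j · [x_{M+1} x_{2M+1}] ⋯ [x_{2M} x_{2M+1}] · g_{A_j}. -/
open MvPolynomial Finset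

section aux

open Polynomial in
lemma gA_detkey {R : Type*} [CommRing R] [Nontrivial R] (M : ℕ) (y : Fin (M+1) → R)
    (z : Fin M → R) :
    (∏ p : Fin (M+1), ∏ q ∈ Ioi p, (y q - y p)) =
    ∑ j : Fin (M+1), (-1:R)^((j:ℕ)+M) * (∏ l, (y j - z l)) *
      ∏ p : Fin M, ∏ q ∈ Ioi p, (y (j.succAbove q) - y (j.succAbove p)) := by
  set P : Polynomial R := ∏ l : Fin M, (Polynomial.X - Polynomial.C (z l)) with hP
  have hPm : P.Monic := monic_prod_of_monic _ _ fun i _ => monic_X_sub_C _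
  have hPd : P.natDegree = M := by
    rw [hP, natDegree_prod_of_monic _ _ fun i _ => monic_X_sub_C _]
    simp [natDegree_X_sub_C, Polynomial.natDegree_X]
  set U : Matrix (Fin (M+1)) (Fin (M+1)) R :=
    fun i k => if k = Fin.last M then P.coeff i else if i = k then 1 else 0 with hU
  set A := Matrix.vandermonde y * U with hA
  have hAentry : ∀ j k, A j k = if k = Fin.last M then ∏ l, (y j - z l) else y j ^ (k:ℕ) := by
    intro j k
    rw [hA, Matrix.mul_apply]
    by_cases hk : k = Fin.last M
    · subst hk
      simp only [hU, if_pos rfl, Matrix.vandermonde, Matrix.of_apply, if_true]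
      have : ∑ i : Fin (M+1), y j ^ (i:ℕ) * P.coeff i
          = ∑ i ∈ Finset.range (M+1), P.coeff i * (y j) ^ i := by
        rw [Fin.sum_univ_eq_sum_range (fun i => y j ^ i * P.coeff i)]
        exact Finset.sum_congr rfl fun i _ => mul_comm _ _
      rw [this, ← Polynomial.eval_eq_sum_range' (by omega : P.natDegree < M + 1)]
      rw [hP]
      simp [Polynomial.eval_prod]
    · rw [if_neg hk]
      simp only [hU, Matrix.vandermonde, Matrix.of_apply]
      rw [Finset.sum_eq_single k]
      · rw [if_neg hk, if_pos rfl, mul_one]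
      · intro i _ hik
        rw [if_neg hk, if_neg hik, mul_zero]
      · simp
  have hdetU : U.det = 1 := by
    rw [Matrix.det_of_upperTriangular]
    · refine Finset.prod_eq_one fun i _ => ?_
      simp only [hU]
      by_cases hi : i = Fin.last M
      · subst hi
        rw [if_pos rfl]
        have : ((Fin.last M : Fin (M+1)) : ℕ) = P.natDegree := by simp [hPd]
        rw [this]
        exact hPm.coeff_natDegree
      · simp [if_neg hi]
    · intro i k hki
      simp only [id_eq] at hki
      simp only [hU]
      rw [if_neg (by exact fun h => absurd (h ▸ hki) (by simp [Fin.lt_iff_val_lt_val]; omega)),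
        if_neg (ne_of_gt hki)]
  have hdetA : A.det = (Matrix.vandermonde y).det := by
    rw [hA, Matrix.det_mul, hdetU, mul_one]
  rw [← Matrix.det_vandermonde, ← hdetA, Matrix.det_succ_column A (Fin.last M)]
  refine Finset.sum_congr rfl fun i _ => ?_
  have h1 : A i (Fin.last M) = ∏ l, (y i - z l) := by rw [hAentry, if_pos rfl]
  have h2 : (A.submatrix i.succAbove (Fin.last M).succAbove)
      = Matrix.vandermonde (y ∘ i.succAbove) := by
    ext p q
    rw [Matrix.submatrix_apply, Fin.succAbove_last, hAentry,
      if_neg (Fin.castSucc_lt_last q).ne]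
    simp [Matrix.vandermonde]
  rw [h1, h2, Matrix.det_vandermonde]
  simp [Function.comp]

lemma gA_ifIoi {R : Type*} [CommMonoid R] {k : ℕ} (f : Fin k → Fin k → R) :
    (∏ p : Fin k, ∏ q : Fin k, if p < q then f p q else 1)
      = ∏ p : Fin k, ∏ q ∈ Ioi p, f p q := by
  refine Finset.prod_congr rfl fun p _ => ?_
  rw [← Finset.prod_filter]
  congr 1
  ext q
  simp

lemma gA_key {R : Type*} [CommRing R] [Nontrivial R] (M : ℕ) (y : Fin (M+1) → R)
    (z : Fin M → R) :
    (∏ p : Fin (M+1), ∏ q : Fin (M+1), if p < q then y p - y q else 1) =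
    ∑ j : Fin (M+1), (-1:R)^(j:ℕ) * (∏ l, (y j - z l)) *
      (∏ p : Fin M, ∏ q : Fin M,
        if p < q then y (j.succAbove p) - y (j.succAbove q) else 1) := by
  rw [gA_ifIoi]
  have h := gA_detkey M (fun p => - y p) (fun l => - z l)
  simp only [neg_sub_neg] at h
  rw [h]
  refine Finset.sum_congr rfl fun j _ => ?_
  rw [gA_ifIoi (fun p q => y (j.succAbove p) - y (j.succAbove q))]
  have hz : (∏ l, (z l - y j)) = (-1:R)^M * ∏ l, (y j - z l) := by
    have : ∀ l : Fin M, z l - y j = (-1) * (y j - z l) := fun l => by ring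
    simp_rw [this]
    rw [Finset.prod_mul_distrib, Finset.prod_const]
    simp
  rw [hz, pow_add]
  have h2 : (-1:R)^(M*2) = 1 := by
    rw [pow_mul, sq, ← pow_add, ← two_mul, pow_mul, neg_one_sq, one_pow]
  ring_nf
  rw [h2, mul_one]

lemma gA_Wsnoc {R : Type*} [CommRing R] {k : ℕ} (v : Fin k → R) (a : R) :
    (∏ p : Fin (k+1), ∏ q : Fin (k+1),
        if p < q then (Fin.snoc v a : Fin (k+1) → R) p - (Fin.snoc v a : Fin (k+1) → R) q
        else 1)
      = ((∏ p : Fin k, ∏ q : Fin k, if p < q then v p - v q else 1))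
          * ∏ p : Fin k, (v p - a) := by
  rw [Fin.prod_univ_castSucc
    (f := fun p => ∏ q : Fin (k+1),
      if p < q then (Fin.snoc v a : Fin (k+1) → R) p - (Fin.snoc v a : Fin (k+1) → R) q else 1)]
  have hlast : (∏ q : Fin (k+1),
      if Fin.last k < q then
        (Fin.snoc v a : Fin (k+1) → R) (Fin.last k) - (Fin.snoc v a : Fin (k+1) → R) q
      else 1) = 1 :=
    Finset.prod_eq_one fun q _ => if_neg (not_lt.mpr (Fin.le_last q))
  rw [hlast, mul_one, ← Finset.prod_mul_distrib]
  refine Finset.prod_congr rfl fun p _ => ?_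
  rw [Fin.prod_univ_castSucc
    (f := fun q => if p.castSucc < q then
      (Fin.snoc v a : Fin (k+1) → R) p.castSucc - (Fin.snoc v a : Fin (k+1) → R) q else 1)]
  congr 1
  · refine Finset.prod_congr rfl fun q _ => ?_
    simp only [Fin.castSucc_lt_castSucc_iff, Fin.snoc_castSucc]
  · rw [if_pos (Fin.castSucc_lt_last p), Fin.snoc_castSucc, Fin.snoc_last]

lemma gA_Wcons {R : Type*} [CommRing R] {k : ℕ} (v : Fin k → R) (a : R) :
    (∏ p : Fin (k+1), ∏ q : Fin (k+1),
        if p < q then (Fin.cons a v : Fin (k+1) → R) p - (Fin.cons a v : Fin (k+1) → R) q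
        else 1)
      = (∏ q : Fin k, (a - v q))
          * ∏ p : Fin k, ∏ q : Fin k, if p < q then v p - v q else 1 := by
  rw [Fin.prod_univ_succ
    (f := fun p => ∏ q : Fin (k+1),
      if p < q then (Fin.cons a v : Fin (k+1) → R) p - (Fin.cons a v : Fin (k+1) → R) q else 1)]
  congr 1
  · rw [Fin.prod_univ_succ
      (f := fun q => if 0 < q then
        (Fin.cons a v : Fin (k+1) → R) 0 - (Fin.cons a v : Fin (k+1) → R) q else 1)]
    rw [if_neg (lt_irrefl _), one_mul]
    refine Finset.prod_congr rfl fun q _ => ?_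
    rw [if_pos (Fin.succ_pos q), Fin.cons_zero, Fin.cons_succ]
  · refine Finset.prod_congr rfl fun p _ => ?_
    rw [Fin.prod_univ_succ
      (f := fun q => if p.succ < q then
        (Fin.cons a v : Fin (k+1) → R) p.succ - (Fin.cons a v : Fin (k+1) → R) q else 1)]
    rw [if_neg (by simp [Fin.lt_iff_val_lt_val]), one_mul]
    refine Finset.prod_congr rfl fun q _ => ?_
    simp only [Fin.succ_lt_succ_iff, Fin.cons_succ]

lemma gA_brS_image {n m k : ℕ} (f : Fin k → Fin m) (hf : StrictMono f) :
    brS n (Finset.image f Finset.univ) =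
      ∏ p : Fin k, ∏ q : Fin k, if p < q then X (f p) ^ n - X (f q) ^ n else 1 := by
  unfold brS
  rw [Finset.prod_image (fun a _ b _ h => hf.injective h)]
  refine Finset.prod_congr rfl fun p _ => ?_
  rw [Finset.prod_image (fun a _ b _ h => hf.injective h)]
  refine Finset.prod_congr rfl fun q _ => ?_
  simp only [hf.lt_iff_lt]

lemma gA_image_cons {m k : ℕ} (b : Fin m) (g : Fin k → Fin m) :
    Finset.image (Fin.cons b g : Fin (k+1) → Fin m) Finset.univ
      = insert b (Finset.image g Finset.univ) := by
  ext t
  simp only [Finset.mem_image, Finset.mem_insert, Finset.mem_univ, true_and]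
  constructor
  · rintro ⟨i, rfl⟩
    refine Fin.cases ?_ (fun k => ?_) i
    · exact Or.inl (by simp)
    · exact Or.inr ⟨k, by simp⟩
  · rintro (rfl | ⟨i, rfl⟩)
    · exact ⟨0, by simp⟩
    · exact ⟨i.succ, by simp⟩

end aux

/-- In `ℂ[x_0, …, x_{2M+1}]`, with
`g_A = x_0 x_1 ⋯ x_M [x_0 … x_M] [x_{M+1} … x_{2M+1}]` and, for `j = 0, …, M`,
`g_{A_j} = x_0 ⋯ x̂_j ⋯ x_M [x_0 … x̂_j … x_M] [x_j x_{M+1} … x_{2M}]`, one has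
`g_A = ∑_{j=0}^M (-1)^j x_j [x_{M+1} x_{2M+1}] ⋯ [x_{2M} x_{2M+1}] g_{A_j}`. -/
theorem gA_decomposition_odd (M n : ℕ) (hM : 1 ≤ M) (hn : 1 ≤ n) :
    (∏ t ∈ Finset.univ.filter (fun t : Fin (2 * M + 2) => t.val ≤ M), X t) *
        brS n (Finset.univ.filter (fun t : Fin (2 * M + 2) => t.val ≤ M)) *
        brS n (Finset.univ.filter (fun t : Fin (2 * M + 2) => M + 1 ≤ t.val)) =
      ∑ j ∈ Finset.univ.filter (fun j : Fin (2 * M + 2) => j.val ≤ M),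
        (-1 : MvPolynomial (Fin (2 * M + 2)) ℂ) ^ j.val * X j *
          (∏ l ∈ Finset.univ.filter
              (fun l : Fin (2 * M + 2) => M + 1 ≤ l.val ∧ l.val ≤ 2 * M),
            (X l ^ n - X (Fin.last (2 * M + 1)) ^ n)) *
          ((∏ t ∈ (Finset.univ.filter (fun t : Fin (2 * M + 2) => t.val ≤ M)).erase j, X t) *
            brS n ((Finset.univ.filter (fun t : Fin (2 * M + 2) => t.val ≤ M)).erase j) *
            brS n (insert j (Finset.univ.filter
              (fun l : Fin (2 * M + 2) => M + 1 ≤ l.val ∧ l.val ≤ 2 * M)))) := by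
  classical
  have hM1 : M - 1 + 1 = M := Nat.succ_pred_eq_of_pos hM
  -- index embeddings
  set fA : Fin (M+1) → Fin (2*M+2) := fun j => ⟨j.val, by omega⟩ with hfA
  set fB : Fin (M+1) → Fin (2*M+2) := fun l => ⟨M+1+l.val, by omega⟩ with hfB
  set fC : Fin M → Fin (2*M+2) := fun l => ⟨M+1+l.val, by omega⟩ with hfC
  have hfAmono : StrictMono fA := fun a b h => h
  have hfBmono : StrictMono fB := fun a b h =>
    show M + 1 + (a : ℕ) < M + 1 + (b : ℕ) from Nat.add_lt_add_left h (M+1)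
  have hfCinj : Function.Injective fC := by
    intro a b h
    have h' : M + 1 + (a : ℕ) = M + 1 + (b : ℕ) := congrArg Fin.val h
    exact Fin.ext (by omega)
  -- set identifications
  have haveA : Finset.univ.filter (fun t : Fin (2 * M + 2) => t.val ≤ M)
      = Finset.image fA Finset.univ := by
    ext t
    simp only [Finset.mem_filter, Finset.mem_univ, true_and, Finset.mem_image]
    constructor
    · intro ht
      exact ⟨⟨t.val, by omega⟩, Fin.ext rfl⟩
    · rintro ⟨j, rfl⟩
      exact Nat.lt_succ_iff.mp j.isLt
  have haveB : Finset.univ.filter (fun t : Fin (2 * M + 2) => M + 1 ≤ t.val)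
      = Finset.image fB Finset.univ := by
    ext t
    simp only [Finset.mem_filter, Finset.mem_univ, true_and, Finset.mem_image]
    constructor
    · intro ht
      have := t.isLt
      refine ⟨⟨t.val - (M+1), by omega⟩, Fin.ext ?_⟩
      show M + 1 + (t.val - (M+1)) = t.val
      omega
    · rintro ⟨l, rfl⟩
      exact Nat.le_add_right (M+1) l.val
  have haveC : Finset.univ.filter (fun l : Fin (2 * M + 2) => M + 1 ≤ l.val ∧ l.val ≤ 2 * M)
      = Finset.image fC Finset.univ := by
    ext t
    simp only [Finset.mem_filter, Finset.mem_univ, true_and, Finset.mem_image]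
    constructor
    · rintro ⟨h1, h2⟩
      refine ⟨⟨t.val - (M+1), by omega⟩, Fin.ext ?_⟩
      show M + 1 + (t.val - (M+1)) = t.val
      omega
    · rintro ⟨l, rfl⟩
      have := l.isLt
      exact ⟨Nat.le_add_right (M+1) l.val, show M + 1 + (l:ℕ) ≤ 2*M by omega⟩
  have haveErase : ∀ j : Fin (M+1),
      (Finset.image fA Finset.univ).erase (fA j)
        = Finset.image (fun p : Fin M => fA (j.succAbove p)) Finset.univ := by
    intro j
    ext t
    simp only [Finset.mem_erase, Finset.mem_image, Finset.mem_univ, true_and]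
    constructor
    · rintro ⟨hne, p, rfl⟩
      have hpj : p ≠ j := fun h => hne (by rw [h])
      obtain ⟨q, hq⟩ := Fin.exists_succAbove_eq hpj
      exact ⟨q, by rw [hq]⟩
    · rintro ⟨q, rfl⟩
      exact ⟨fun h => Fin.succAbove_ne j q (hfAmono.injective h), ⟨j.succAbove q, rfl⟩⟩
  -- the B-bracket factors
  have hBfact : (∏ p : Fin (M+1), ∏ q : Fin (M+1),
        if p < q then X (fB p) ^ n - X (fB q) ^ n
        else (1 : MvPolynomial (Fin (2*M+2)) ℂ))
      = (∏ p : Fin M, ∏ q : Fin M, if p < q then X (fC p) ^ n - X (fC q) ^ n else 1)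
          * ∏ p : Fin M, (X (fC p) ^ n - X (Fin.last (2*M+1)) ^ n) := by
    have h2 : (Fin.snoc (fun l : Fin M => (X (fC l) ^ n : MvPolynomial (Fin (2*M+2)) ℂ))
          (X (Fin.last (2*M+1)) ^ n) : Fin (M+1) → MvPolynomial (Fin (2*M+2)) ℂ)
        = fun l => X (fB l) ^ n := by
      funext i
      refine Fin.lastCases ?_ (fun k => ?_) i
      · rw [Fin.snoc_last]
        congr 2
        refine Fin.ext ?_
        show 2*M+1 = M+1+M
        omega
      · rw [Fin.snoc_castSucc]
        rfl
    have h1 := gA_Wsnoc (fun l : Fin M => (X (fC l) ^ n : MvPolynomial (Fin (2*M+2)) ℂ))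
      (X (Fin.last (2*M+1)) ^ n)
    rw [h2] at h1
    exact h1
  -- strict monotonicity of the cons map
  have hconsmono : ∀ j : Fin (M+1),
      StrictMono (Fin.cons (fA j) fC : Fin (M+1) → Fin (2*M+2)) := by
    intro j a b hab
    have hv : ∀ i : Fin (M+1),
        ((Fin.cons (fA j) fC : Fin (M+1) → Fin (2*M+2)) i).val
          = if (i:ℕ) = 0 then (j:ℕ) else M + i.val := by
      intro i
      refine Fin.cases ?_ (fun k => ?_) i
      · rw [Fin.cons_zero]
        exact (if_pos rfl).symm
      · rw [Fin.cons_succ, Fin.val_succ, if_neg (Nat.succ_ne_zero _)]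
        show M + 1 + (k:ℕ) = M + ((k:ℕ)+1)
        omega
    rw [Fin.lt_iff_val_lt_val] at hab ⊢
    rw [hv a, hv b]
    have hj := j.isLt
    have hb := b.isLt
    have ha := a.isLt
    split_ifs with h1 h2 h2 <;> omega
  -- the cons-bracket factors
  have hWcons : ∀ j : Fin (M+1),
      (∏ p : Fin (M+1), ∏ q : Fin (M+1),
        if p < q then
          X ((Fin.cons (fA j) fC : Fin (M+1) → Fin (2*M+2)) p) ^ n
            - X ((Fin.cons (fA j) fC : Fin (M+1) → Fin (2*M+2)) q) ^ n
        else (1 : MvPolynomial (Fin (2*M+2)) ℂ))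
      = (∏ l : Fin M, (X (fA j) ^ n - X (fC l) ^ n))
          * ∏ p : Fin M, ∏ q : Fin M, if p < q then X (fC p) ^ n - X (fC q) ^ n else 1 := by
    intro j
    have h2 : (fun i : Fin (M+1) =>
          (X ((Fin.cons (fA j) fC : Fin (M+1) → Fin (2*M+2)) i) ^ n
            : MvPolynomial (Fin (2*M+2)) ℂ))
        = (Fin.cons (X (fA j) ^ n) (fun l : Fin M => X (fC l) ^ n)
            : Fin (M+1) → MvPolynomial (Fin (2*M+2)) ℂ) := by
      funext i
      refine Fin.cases ?_ (fun k => ?_) i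
      · simp
      · simp
    have h1 := gA_Wcons (fun l : Fin M => (X (fC l) ^ n : MvPolynomial (Fin (2*M+2)) ℂ))
      (X (fA j) ^ n)
    rw [← h2] at h1
    exact h1
  have hkey := gA_key M (fun j => (X (fA j) ^ n : MvPolynomial (Fin (2*M+2)) ℂ))
    (fun l => X (fC l) ^ n)
  beta_reduce at hkey
  -- main calculation
  calc (∏ t ∈ Finset.univ.filter (fun t : Fin (2 * M + 2) => t.val ≤ M), X t) *
        brS n (Finset.univ.filter (fun t : Fin (2 * M + 2) => t.val ≤ M)) *
        brS n (Finset.univ.filter (fun t : Fin (2 * M + 2) => M + 1 ≤ t.val))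
      = ∑ j : Fin (M+1),
          ((-1 : MvPolynomial (Fin (2*M+2)) ℂ) ^ (j:ℕ)
              * (∏ l : Fin M, (X (fA j) ^ n - X (fC l) ^ n))
              * (∏ p : Fin M, ∏ q : Fin M,
                  if p < q then X (fA (j.succAbove p)) ^ n - X (fA (j.succAbove q)) ^ n else 1))
            * ((∏ t ∈ Finset.image fA Finset.univ, X t)
                * (∏ l : Fin M, (X (fC l) ^ n - X (Fin.last (2*M+1)) ^ n))
                * (∏ p : Fin M, ∏ q : Fin M,
                    if p < q then X (fC p) ^ n - X (fC q) ^ n else 1)) := by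
        rw [haveA, haveB, gA_brS_image fA hfAmono, gA_brS_image fB hfBmono, hBfact,
          ← Finset.sum_mul, ← hkey]
        ring
    _ = _ := by
        rw [haveA, haveC,
          Finset.sum_image (fun a _ b _ h => hfAmono.injective h)]
        refine Finset.sum_congr rfl fun j _ => ?_
        rw [haveErase j,
          gA_brS_image (fun p : Fin M => fA (j.succAbove p))
            (hfAmono.comp (Fin.strictMono_succAbove j)),
          ← gA_image_cons (fA j) fC,
          gA_brS_image _ (hconsmono j),
          hWcons j,
          Finset.prod_image (fun a _ b _ h => hfCinj h)]
        have hval : (fA j).val = (j : ℕ) := rfl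
        have hm : (∏ t ∈ Finset.image fA Finset.univ, (X t : MvPolynomial (Fin (2*M+2)) ℂ))
            = X (fA j) * ∏ t ∈ Finset.image (fun p : Fin M => fA (j.succAbove p)) Finset.univ,
                X t := by
          rw [← haveErase j]
          exact (Finset.mul_prod_erase _ _
            (Finset.mem_image_of_mem fA (Finset.mem_univ j))).symm
        rw [hval, hm]
        ring
end
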